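/- Let E be a real normed space, K ⊆ E a nontrivial cone with norm-base B_K, and A ⊆ E a nontrivial cone with norm-base B_A. Assume that cl S_{−cl(conv K)} is weakly compact. Then the following are equivalent: (1) cl S_A^0 ∩ cl S_{−K} = ∅; (2) cl S_{cl A}^0 ∩ cl S_{−cl(conv K)} = ∅; (3) there exists (x*, α) ∈ K^{aw#} with α > 0 such that x*(a) + α‖a‖ > 0 for all a ∈ A \ {0} and x*(k) + α‖k‖ < 0 for all k ∈ (−K) \ {0}; (4) there exists (x*, α) ∈ K^{aw#} with α > 0 such that x*(a) + α‖a‖ > 0 for all a ∈ (cl A) \ {0} and x*(k) + α‖k‖ < 0 for all k ∈ (−cl(conv K)) \ {0}. -/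

import Mathlib

open Set

variable {E : Type*} [NormedAddCommGroup E] [NormedSpace ℝ E]

/-- `K` is a cone: contains `0` and is closed under nonnegative scalar multiplication. -/
def IsCone (K : Set E) : Prop :=
  (0 : E) ∈ K ∧ ∀ t : ℝ, 0 ≤ t → ∀ x ∈ K, t • x ∈ K

/-- A cone is nontrivial if it is neither `{0}` nor the whole space. -/
def IsNontrivialCone (K : Set E) : Prop :=
  IsCone K ∧ K ≠ {0} ∧ K ≠ Set.univ

/-- The norm-base of a cone: its intersection with the unit sphere. -/
def normBase (K : Set E) : Set E := {x ∈ K | ‖x‖ = 1}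

/-- Closure of a set with respect to the weak topology `σ(E, E*)`. -/
noncomputable def wClosure (S : Set E) : Set E :=
  (toWeakSpace ℝ E).symm '' closure ((toWeakSpace ℝ E) '' S)

/-- A set is weakly compact if it is compact in the weak topology `σ(E, E*)`. -/
def WeaklyCompact (S : Set E) : Prop :=
  IsCompact ((toWeakSpace ℝ E) '' S)

/-- A set is weakly closed if it equals its weak closure. -/
noncomputable def WeaklyClosed (S : Set E) : Prop :=
  wClosure S = S

/-- The (topological) dual cone `K⁺`. -/
def dualCone (K : Set E) : Set (E →L[ℝ] ℝ) :=
  {f | ∀ k ∈ K, 0 ≤ f k}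

/-- The set `K^#` of functionals strictly positive on `K \ {0}`. -/
def sharpCone (K : Set E) : Set (E →L[ℝ] ℝ) :=
  {f | ∀ k ∈ K, k ≠ 0 → 0 < f k}

/-- The set `K^{w#}` of functionals strictly positive on the weak closure of the norm-base. -/
noncomputable def wSharpCone (K : Set E) : Set (E →L[ℝ] ℝ) :=
  {f | ∀ x ∈ wClosure (normBase K), 0 < f x}

/-- The algebraic interior (core) of a set in a real vector space. -/
def core {X : Type*} [AddCommGroup X] [Module ℝ X] (Ω : Set X) : Set X :=
  {x ∈ Ω | ∀ v : X, ∃ ε > 0, ∀ t ∈ Set.Icc (0 : ℝ) ε, x + t • v ∈ Ω}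

/-- The augmented dual cone `K^{a+}`. -/
def augDualCone (K : Set E) : Set ((E →L[ℝ] ℝ) × ℝ) :=
  {p | 0 ≤ p.2 ∧ ∀ y ∈ K, 0 ≤ p.1 y - p.2 * ‖y‖}

/-- The set `K^{a#}`. -/
def augSharpCone (K : Set E) : Set ((E →L[ℝ] ℝ) × ℝ) :=
  {p | 0 ≤ p.2 ∧ p.1 ∈ sharpCone K ∧ ∀ y ∈ K, y ≠ 0 → 0 < p.1 y - p.2 * ‖y‖}

/-- The set `K^{aw#}`. -/
noncomputable def augWSharpCone (K : Set E) : Set ((E →L[ℝ] ℝ) × ℝ) :=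
  {p | 0 ≤ p.2 ∧ p.1 ∈ sharpCone K ∧ ∀ y ∈ wClosure (normBase K), p.2 < p.1 y}

/-- `S_C = conv(B_C)`. -/
noncomputable def convBase (C : Set E) : Set E := convexHull ℝ (normBase C)

/-- `S_C^0 = conv({0} ∪ B_C)`. -/
noncomputable def convBase0 (C : Set E) : Set E := convexHull ℝ ({0} ∪ normBase C)

/-!
For (1) ⇒ (3) and (2) ⇒ (4), separate the closed convex set `cl S_A^0` from the weakly
compact convex set `cl S_{-K}` strictly by a functional `g`, say `g < u` on the first and
`g > v > u` on the second. Since every nonzero point of a cone is a positive multiple of a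
point of its norm-base, `x* = -g` and `α = u` work. Conversely, given `(x*, α)` as in (3), `x*`
attains its minimum `μ > α` on the weakly compact weak closure of `B_K`, so `x* ≥ μ ‖·‖` on
`cl (conv K)`; together with `x* + α ‖·‖ ≥ 0` on `cl A` this puts `cl S_{cl A}^0` in
`{x* ≥ -α}` and `cl S_{-cl (conv K)}` in `{x* ≤ -μ}`. The remaining implications are
monotonicity.
-/

theorem continuous_apply_toWeakSpace_symm (f : E →L[ℝ] ℝ) :
    Continuous fun x : WeakSpace ℝ E => f ((toWeakSpace ℝ E).symm x) :=
  WeakBilin.eval_continuous (topDualPairing ℝ E).flip f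

theorem mem_wClosure_iff {S : Set E} {y : E} :
    y ∈ wClosure S ↔ toWeakSpace ℝ E y ∈ closure (toWeakSpace ℝ E '' S) := by
  constructor
  · rintro ⟨z, hz, rfl⟩
    simpa using hz
  · exact fun h => ⟨_, h, by simp⟩

theorem subset_wClosure (S : Set E) : S ⊆ wClosure S := fun _ hx =>
  mem_wClosure_iff.2 (subset_closure (mem_image_of_mem _ hx))

theorem le_apply_of_mem_wClosure {f : E →L[ℝ] ℝ} {c : ℝ} {S : Set E} (h : ∀ x ∈ S, c ≤ f x)
    {y : E} (hy : y ∈ wClosure S) : c ≤ f y :=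
  closure_minimal (by rintro - ⟨x, hx, rfl⟩; exact h x hx)
    (isClosed_le continuous_const (continuous_apply_toWeakSpace_symm f)) (mem_wClosure_iff.1 hy)

theorem isClosed_toWeakSpace_image {P : Set E} (hP : Convex ℝ P) (hPc : IsClosed P) :
    IsClosed (toWeakSpace ℝ E '' P) := by
  rw [← hPc.closure_eq, hP.toWeakSpace_closure ℝ]
  exact isClosed_closure

theorem WeaklyCompact.of_isClosed_subset {C D : Set E} (hC : WeaklyCompact C)
    (hD : Convex ℝ D) (hDc : IsClosed D) (h : D ⊆ C) : WeaklyCompact D :=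
  IsCompact.of_isClosed_subset hC (isClosed_toWeakSpace_image hD hDc) (image_mono h)

theorem WeaklyCompact.neg {C : Set E} (hC : WeaklyCompact C) : WeaklyCompact (-C) := by
  have h : toWeakSpace ℝ E '' (-C) = -(toWeakSpace ℝ E '' C) := by
    simp_rw [← image_neg_eq_neg, image_image, map_neg]
  unfold WeaklyCompact
  rw [h]
  exact IsCompact.neg hC

theorem exists_isMinOn_wClosure (f : E →L[ℝ] ℝ) {S C : Set E} (hS : S.Nonempty)
    (hC : WeaklyCompact C) (hCc : Convex ℝ C) (hCcl : IsClosed C) (hSC : S ⊆ C) :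
    ∃ y₀ ∈ wClosure S, IsMinOn f (wClosure S) y₀ := by
  have hcpt : IsCompact (closure (toWeakSpace ℝ E '' S)) :=
    IsCompact.of_isClosed_subset hC isClosed_closure
      (closure_minimal (image_mono hSC) (isClosed_toWeakSpace_image hCc hCcl))
  obtain ⟨z, hz, hmin⟩ := hcpt.exists_isMinOn (hS.image _).closure
    (continuous_apply_toWeakSpace_symm f).continuousOn
  exact ⟨_, ⟨z, hz, rfl⟩, fun y hy => hmin (mem_wClosure_iff.1 hy)⟩

theorem geometric_hahn_banach_closed_weaklyCompact {P Q : Set E} (hP : Convex ℝ P)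
    (hPc : IsClosed P) (hQ : Convex ℝ Q) (hQc : WeaklyCompact Q) (hPQ : Disjoint P Q) :
    ∃ (f : E →L[ℝ] ℝ) (u v : ℝ), (∀ a ∈ P, f a < u) ∧ u < v ∧ ∀ b ∈ Q, v < f b := by
  -- `WeakSpace` is a type synonym, so instance search does not see the `WeakBilin` instance.
  have : LocallyConvexSpace ℝ (WeakSpace ℝ E) := WeakBilin.locallyConvexSpace
  obtain ⟨g, u, v, hgu, huv, hvg⟩ := geometric_hahn_banach_closed_compact
    (hP.linear_image (toWeakSpace ℝ E).toLinearMap) (isClosed_toWeakSpace_image hP hPc)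
    (hQ.linear_image (toWeakSpace ℝ E).toLinearMap) hQc
    (disjoint_image_of_injective (toWeakSpace ℝ E).injective hPQ)
  exact ⟨g.comp (toWeakSpaceCLM ℝ E), u, v, fun a ha => hgu _ (mem_image_of_mem _ ha), huv,
    fun b hb => hvg _ (mem_image_of_mem _ hb)⟩

theorem convex_setOf_mul_norm_le (f : E →L[ℝ] ℝ) {μ : ℝ} (hμ : 0 ≤ μ) :
    Convex ℝ {x : E | μ * ‖x‖ ≤ f x} := by
  have := (((f : E →ₗ[ℝ] ℝ).concaveOn convex_univ).sub
    ((convexOn_norm convex_univ).smul hμ)).convex_ge 0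
  simpa [sub_nonneg] using this

omit [NormedSpace ℝ E] in
theorem normBase_neg (K : Set E) : normBase (-K) = -normBase K := by
  ext x
  simp [normBase]

omit [NormedSpace ℝ E] in
theorem normBase_mono {S T : Set E} (h : S ⊆ T) : normBase S ⊆ normBase T :=
  fun _ hx => ⟨h hx.1, hx.2⟩

namespace IsCone

variable {K : Set E}

protected theorem closure (h : IsCone K) : IsCone (closure K) :=
  ⟨subset_closure h.1, fun t ht =>
    MapsTo.closure (f := (t • ·)) (h.2 t ht) (continuous_const_smul t)⟩

protected theorem convexHull (h : IsCone K) : IsCone (convexHull ℝ K) := by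
  refine ⟨subset_convexHull ℝ K h.1, fun t ht x hx => ?_⟩
  have := (LinearMap.lsmul ℝ E t).image_convexHull K
  exact (this.subset.trans (convexHull_mono (image_subset_iff.2 (h.2 t ht)))) ⟨x, hx, rfl⟩

protected theorem neg (h : IsCone K) : IsCone (-K) :=
  ⟨by simpa using h.1, fun t ht x hx => by simpa using h.2 t ht _ hx⟩

theorem inv_norm_smul_mem_normBase (h : IsCone K) {x : E} (hx : x ∈ K) (hx0 : x ≠ 0) :
    ‖x‖⁻¹ • x ∈ normBase K :=
  ⟨h.2 _ (by positivity) x hx, by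
    rw [norm_smul, norm_inv, norm_norm, inv_mul_cancel₀ (norm_ne_zero_iff.2 hx0)]⟩

theorem mul_norm_lt_of_forall_normBase (h : IsCone K) {f : E →L[ℝ] ℝ} {c : ℝ}
    (hf : ∀ y ∈ normBase K, c < f y) {x : E} (hx : x ∈ K) (hx0 : x ≠ 0) : c * ‖x‖ < f x := by
  have hn : 0 < ‖x‖ := norm_pos_iff.2 hx0
  have := hf _ (h.inv_norm_smul_mem_normBase hx hx0)
  rwa [map_smul, smul_eq_mul, lt_inv_mul_iff₀ hn, mul_comm] at this

theorem mul_norm_le_of_forall_normBase (h : IsCone K) {f : E →L[ℝ] ℝ} {c : ℝ}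
    (hf : ∀ y ∈ normBase K, c ≤ f y) {x : E} (hx : x ∈ K) : c * ‖x‖ ≤ f x := by
  rcases eq_or_ne x 0 with rfl | hx0
  · simp
  have hn : 0 < ‖x‖ := norm_pos_iff.2 hx0
  have := hf _ (h.inv_norm_smul_mem_normBase hx hx0)
  rwa [map_smul, smul_eq_mul, le_inv_mul_iff₀ hn, mul_comm] at this

end IsCone

theorem IsNontrivialCone.normBase_nonempty {K : Set E} (hK : IsNontrivialCone K) :
    (normBase K).Nonempty := by
  obtain ⟨k, hk, hk0⟩ : ∃ k ∈ K, k ≠ 0 := by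
    by_contra! h
    exact hK.2.1 (eq_singleton_iff_unique_mem.2 ⟨hK.1.1, h⟩)
  exact ⟨_, hK.1.inv_norm_smul_mem_normBase hk hk0⟩

theorem exists_augWSharpCone_of_disjoint {K A C : Set E} (hA : IsCone A) (hC : IsCone C)
    (hKC : K ⊆ C) (hcomp : WeaklyCompact (closure (convBase (-C))))
    (hdisj : Disjoint (closure (convBase0 A)) (closure (convBase (-C)))) :
    ∃ f : E →L[ℝ] ℝ, ∃ α : ℝ, (f, α) ∈ augWSharpCone K ∧ 0 < α ∧
      (∀ a ∈ A, a ≠ 0 → 0 < f a + α * ‖a‖) ∧ (∀ k ∈ -C, k ≠ 0 → f k + α * ‖k‖ < 0) := by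
  obtain ⟨g, u, v, hgu, huv, hvg⟩ := geometric_hahn_banach_closed_weaklyCompact
    (convex_convexHull ℝ _).closure isClosed_closure (convex_convexHull ℝ _).closure hcomp hdisj
  have hu : 0 < u := by
    simpa using hgu 0 (subset_closure (subset_convexHull ℝ _ (mem_union_left _ rfl)))
  have hAsep : ∀ a ∈ A, a ≠ 0 → 0 < -g a + u * ‖a‖ := by
    intro a ha ha0
    have := hA.mul_norm_lt_of_forall_normBase (f := -g) (c := -u) (fun y hy => by
      simpa using hgu y (subset_closure (subset_convexHull ℝ _ (mem_union_right _ hy)))) ha ha0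
    simp only [neg_apply] at this
    linarith
  have hCsep : ∀ k ∈ -C, k ≠ 0 → -g k + u * ‖k‖ < 0 := by
    intro k hk hk0
    have hvk := hC.neg.mul_norm_lt_of_forall_normBase
      (fun y hy => hvg y (subset_closure (subset_convexHull ℝ _ hy))) hk hk0
    have := mul_lt_mul_of_pos_right huv (norm_pos_iff.2 hk0)
    linarith
  refine ⟨-g, u, ⟨hu.le, fun k hk hk0 => ?_, fun y hy => ?_⟩, hu, hAsep, hCsep⟩
  · have := hCsep (-k) (neg_mem_neg.2 (hKC hk)) (neg_ne_zero.2 hk0)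
    simp only [neg_apply, map_neg, neg_neg, norm_neg] at this ⊢
    linarith [mul_pos hu (norm_pos_iff.2 hk0)]
  · refine huv.trans_le (le_apply_of_mem_wClosure (fun x hx => ?_) hy)
    have hx' : -x ∈ normBase (-C) := by
      rw [normBase_neg, neg_mem_neg]
      exact normBase_mono hKC hx
    simpa using (hvg _ (subset_closure (subset_convexHull ℝ _ hx'))).le

theorem neg_le_apply_of_mem_closure_convBase0 {A : Set E} {f : E →L[ℝ] ℝ} {α : ℝ} (hα : 0 ≤ α)
    (hA : ∀ a ∈ A, 0 ≤ f a + α * ‖a‖) {x : E} (hx : x ∈ closure (convBase0 (closure A))) :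
    -α ≤ f x := by
  have hclA : closure A ⊆ {a | 0 ≤ f a + α * ‖a‖} :=
    closure_minimal hA (isClosed_le continuous_const (by fun_prop))
  refine closure_minimal (convexHull_min ?_ (convex_halfSpace_ge f.isLinear (-α)))
    (isClosed_le continuous_const f.continuous) hx
  rintro y (rfl | ⟨hyA, hy1⟩)
  · simpa using hα
  · have := hclA hyA
    simp only [mem_ofPred_eq, ContinuousLinearMap.coe_coe, hy1] at this ⊢
    linarith

theorem apply_le_neg_of_mem_closure_convBase_neg {K : Set E} (hK : IsCone K) {f : E →L[ℝ] ℝ}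
    {μ : ℝ} (hμ : 0 ≤ μ) (hf : ∀ y ∈ normBase K, μ ≤ f y) {x : E}
    (hx : x ∈ closure (convBase (-(closure (convexHull ℝ K))))) : f x ≤ -μ := by
  have hclK : closure (convexHull ℝ K) ⊆ {k | μ * ‖k‖ ≤ f k} :=
    closure_minimal (convexHull_min (fun k hk => hK.mul_norm_le_of_forall_normBase hf hk)
      (convex_setOf_mul_norm_le f hμ)) (isClosed_le (by fun_prop) f.continuous)
  refine closure_minimal (convexHull_min (fun y hy => ?_) (convex_halfSpace_le f.isLinear (-μ)))
    (isClosed_le f.continuous continuous_const) hx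
  rw [normBase_neg] at hy
  have := hclK hy.1
  simp only [mem_ofPred_eq, ContinuousLinearMap.coe_coe, hy.2, map_neg] at this ⊢
  linarith

theorem disjoint_of_mem_augWSharpCone {K A : Set E} (hK : IsCone K) (hBK : (normBase K).Nonempty)
    (hcomp : WeaklyCompact (closure (convBase (-(closure (convexHull ℝ K))))))
    {f : E →L[ℝ] ℝ} {α : ℝ} (hfα : (f, α) ∈ augWSharpCone K)
    (hA : ∀ a ∈ A, a ≠ 0 → 0 < f a + α * ‖a‖) :
    Disjoint (closure (convBase0 (closure A)))
      (closure (convBase (-(closure (convexHull ℝ K))))) := by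
  obtain ⟨hα, -, hfB⟩ := hfα
  have hBQ : normBase K ⊆ -closure (convBase (-(closure (convexHull ℝ K)))) := fun x hx =>
    subset_closure (subset_convexHull ℝ _ (by
      rw [normBase_neg, neg_mem_neg]
      exact normBase_mono ((subset_convexHull ℝ K).trans subset_closure) hx))
  obtain ⟨y₀, hy₀, hmin⟩ := exists_isMinOn_wClosure f hBK hcomp.neg
    (convex_convexHull ℝ _).closure.neg isClosed_closure.neg hBQ
  have hαy₀ := hfB y₀ hy₀
  have hAle : ∀ a ∈ A, 0 ≤ f a + α * ‖a‖ := fun a ha => by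
    rcases eq_or_ne a 0 with rfl | ha0
    · simp
    · exact (hA a ha ha0).le
  refine disjoint_left.2 fun x hxA hxK => ?_
  have h1 := neg_le_apply_of_mem_closure_convBase0 hα hAle hxA
  have h2 := apply_le_neg_of_mem_closure_convBase_neg hK (hα.trans hαy₀.le)
    (fun y hy => hmin (subset_wClosure _ hy)) hxK
  linarith

theorem stmt17 (K A : Set E) (hK : IsNontrivialCone K) (hA : IsNontrivialCone A)
    (hcomp : WeaklyCompact (closure (convBase (-(closure (convexHull ℝ K)))))) :
    List.TFAE [
      closure (convBase0 A) ∩ closure (convBase (-K)) = ∅,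
      closure (convBase0 (closure A)) ∩
        closure (convBase (-(closure (convexHull ℝ K)))) = ∅,
      (∃ f : E →L[ℝ] ℝ, ∃ α : ℝ, (f, α) ∈ augWSharpCone K ∧ 0 < α ∧
        (∀ a ∈ A, a ≠ 0 → 0 < f a + α * ‖a‖) ∧
        (∀ k ∈ (-K : Set E), k ≠ 0 → f k + α * ‖k‖ < 0)),
      (∃ f : E →L[ℝ] ℝ, ∃ α : ℝ, (f, α) ∈ augWSharpCone K ∧ 0 < α ∧
        (∀ a ∈ closure A, a ≠ 0 → 0 < f a + α * ‖a‖) ∧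
        (∀ k ∈ -(closure (convexHull ℝ K)), k ≠ 0 → f k + α * ‖k‖ < 0))] := by
  have hKK : K ⊆ closure (convexHull ℝ K) := (subset_convexHull ℝ K).trans subset_closure
  have hP : closure (convBase0 A) ⊆ closure (convBase0 (closure A)) :=
    closure_mono (convexHull_mono (union_subset_union_right _ (normBase_mono subset_closure)))
  have hQ : closure (convBase (-K)) ⊆ closure (convBase (-(closure (convexHull ℝ K)))) :=
    closure_mono (convexHull_mono (normBase_mono (neg_subset_neg.2 hKK)))
  simp only [← disjoint_iff_inter_eq_empty]
  tfae_have 1 → 3 := exists_augWSharpCone_of_disjoint hA.1 hK.1 subset_rfl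
    (hcomp.of_isClosed_subset (convex_convexHull ℝ _).closure isClosed_closure hQ)
  tfae_have 2 → 4 := exists_augWSharpCone_of_disjoint hA.1.closure hK.1.convexHull.closure hKK
    hcomp
  tfae_have 4 → 3
  | ⟨f, α, hfα, hα, hA4, hK4⟩ => ⟨f, α, hfα, hα, fun a ha => hA4 a (subset_closure ha),
      fun k hk => hK4 k (neg_subset_neg.2 hKK hk)⟩
  tfae_have 2 → 1 := fun h => h.mono hP hQ
  tfae_have 3 → 2
  | ⟨f, α, hfα, _, hA3, _⟩ => disjoint_of_mem_augWSharpCone hK.1 hK.normBase_nonempty hcomp hfα hA3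
  tfae_finish
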